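/- arXiv:math/0305211 — 2 statements merged into one kernel-verified Lean document; each statement's English description precedes it below -/
import Mathlib

section
/- Let H₁ and H₂ be complex Hilbert spaces, F : H₁ → H₂ a linear, closed, densely defined operator, and C > 0 a fixed constant. Then the estimate ‖u‖ ≤ C‖Fu‖ holds for all u ∈ Dom(F) ∩ closure(Range(F*)) if and only if the estimate ‖v‖ ≤ C‖F*v‖ holds for all v ∈ Dom(F*) ∩ closure(Range(F)). In particular, the best constants in the two estimates are the same. -/
/-!
Write `y ∈ Dom F*` as `y₁ + y₀` with `y₁ ∈ closure (Range F)` and `y₀ ⊥ Range F`; then `y₀ ∈ Ker F*`,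
so `|⟪u, F* y⟫| = |⟪y₁, F u⟫| ≤ C ‖F* y₁‖ ‖F u‖ = C ‖F* y‖ ‖F u‖`, and testing `u ∈ closure (Range F*)`
against `Range F*` gives `‖u‖ ≤ C ‖F u‖`. The argument only uses that the two operators are formal
adjoints and that the orthogonal complement of the range of each lies in the kernel of the other.
For `(Range F)ᗮ ⊆ Ker F*` this is immediate; `(Range F*)ᗮ ⊆ Ker F` needs the graph of `F` to be
closed, so that it equals its double orthogonal complement.
-/

open LinearPMap

section

variable {𝕜 E F : Type*} [RCLike 𝕜] [NormedAddCommGroup E] [InnerProductSpace 𝕜 E]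
  [NormedAddCommGroup F] [InnerProductSpace 𝕜 F]

local notation "⟪" x ", " y "⟫" => inner 𝕜 x y

variable (𝕜) in
theorem norm_le_of_mem_closure_of_norm_inner_le {s : Set E} {v : E} (hv : v ∈ closure s)
    {M : ℝ} (hM : 0 ≤ M) (h : ∀ w ∈ s, ‖⟪v, w⟫‖ ≤ M * ‖w‖) : ‖v‖ ≤ M := by
  have hclosed : IsClosed {w : E | ‖⟪v, w⟫‖ ≤ M * ‖w‖} :=
    isClosed_le (by fun_prop) (by fun_prop)
  have hvv : ‖⟪v, v⟫‖ ≤ M * ‖v‖ := closure_minimal h hclosed hv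
  rw [inner_self_eq_norm_sq_to_K, norm_pow, RCLike.norm_ofReal, abs_norm] at hvv
  nlinarith [norm_nonneg v]

/-- The estimate `‖u‖ ≤ C ‖T u‖` for all `u` in the domain of `T` that lie in `s`. -/
def LinearPMap.IsBoundedBelowOn (T : E →ₗ.[𝕜] F) (s : Set E) (C : ℝ) : Prop :=
  ∀ u : T.domain, (u : E) ∈ s → ‖(u : E)‖ ≤ C * ‖T u‖

variable {T : E →ₗ.[𝕜] F} {S : F →ₗ.[𝕜] E}

theorem LinearPMap.exists_mem_closure_range_apply_eq [CompleteSpace F]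
    (hker : ∀ y ∈ (LinearMap.range T.toFun)ᗮ, ∃ h : y ∈ S.domain, S ⟨y, h⟩ = 0)
    (y : S.domain) :
    ∃ y₁ : S.domain, (y₁ : F) ∈ _root_.closure (LinearMap.range T.toFun : Set F) ∧ S y₁ = S y := by
  let K := (LinearMap.range T.toFun).topologicalClosure
  have : CompleteSpace K := (Submodule.isClosed_topologicalClosure _).completeSpace_coe
  obtain ⟨y₁, hy₁, y₀, hy₀, hy⟩ := Submodule.exists_add_mem_mem_orthogonal (K := K) (y : F)
  rw [← SetLike.mem_coe, Submodule.topologicalClosure_coe] at hy₁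
  rw [Submodule.orthogonal_closure] at hy₀
  obtain ⟨hy₀S, hSy₀⟩ := hker y₀ hy₀
  refine ⟨y - ⟨y₀, hy₀S⟩, ?_, by rw [LinearPMap.map_sub, hSy₀, sub_zero]⟩
  simpa [hy] using hy₁

theorem LinearPMap.IsFormalAdjoint.isBoundedBelowOn_closure_range [CompleteSpace F]
    (hTS : T.IsFormalAdjoint S)
    (hker : ∀ y ∈ (LinearMap.range T.toFun)ᗮ, ∃ h : y ∈ S.domain, S ⟨y, h⟩ = 0)
    {C : ℝ} (hC : 0 ≤ C) (hS : S.IsBoundedBelowOn (_root_.closure (LinearMap.range T.toFun)) C) :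
    T.IsBoundedBelowOn (_root_.closure (LinearMap.range S.toFun)) C := by
  intro u hu
  refine norm_le_of_mem_closure_of_norm_inner_le 𝕜 hu (by positivity) ?_
  rintro _ ⟨y, rfl⟩
  obtain ⟨y₁, hy₁, hSy₁⟩ := exists_mem_closure_range_apply_eq hker y
  calc ‖⟪(u : E), S y⟫‖ = ‖⟪(y₁ : F), T u⟫‖ := by
        rw [← hSy₁, ← hTS u y₁, norm_inner_symm]
    _ ≤ ‖(y₁ : F)‖ * ‖T u‖ := norm_inner_le_norm _ _
    _ ≤ C * ‖S y₁‖ * ‖T u‖ := by gcongr; exact hS y₁ hy₁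
    _ = C * ‖T u‖ * ‖S y‖ := by rw [hSy₁]; ring

variable [CompleteSpace E]

theorem LinearPMap.exists_adjoint_apply_eq_zero_of_mem_orthogonal_range
    (hT : Dense (T.domain : Set E)) {y : F} (hy : y ∈ (LinearMap.range T.toFun)ᗮ) :
    ∃ h : y ∈ T†.domain, T† ⟨y, h⟩ = 0 := by
  have hy' : ∀ x : T.domain, ⟪(0 : E), x⟫ = ⟪y, T x⟫ := fun x => by
    rw [inner_zero_left]; exact ((Submodule.mem_orthogonal' _ y).mp hy _ ⟨x, rfl⟩).symm
  exact ⟨mem_adjoint_domain_of_exists y ⟨0, hy'⟩, adjoint_apply_eq hT _ hy'⟩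

theorem LinearPMap.exists_adjoint_apply_eq_neg_of_mem_orthogonal_graph
    (hT : Dense (T.domain : Set E)) {w : WithLp 2 (E × F)}
    (hw : w ∈ (T.graph.comap (WithLp.linearEquiv 2 𝕜 (E × F)).toLinearMap)ᗮ) :
    ∃ h : w.ofLp.2 ∈ T†.domain, T† ⟨w.ofLp.2, h⟩ = -w.ofLp.1 := by
  have hw' : ∀ x : T.domain, ⟪-w.ofLp.1, x⟫ = ⟪w.ofLp.2, T x⟫ := fun x => by
    have h := (Submodule.mem_orthogonal' _ w).mp hw (WithLp.toLp 2 ((x : E), T x)) (T.mem_graph x)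
    rw [inner_neg_left, neg_eq_iff_add_eq_zero]
    simpa only [WithLp.prod_inner_apply] using h
  exact ⟨mem_adjoint_domain_of_exists _ ⟨_, hw'⟩, adjoint_apply_eq hT _ hw'⟩

theorem LinearPMap.exists_apply_eq_zero_of_mem_orthogonal_range_adjoint [CompleteSpace F]
    (hT : Dense (T.domain : Set E)) (hclosed : T.IsClosed) {u : E}
    (hu : u ∈ (LinearMap.range T†.toFun)ᗮ) : ∃ h : u ∈ T.domain, T ⟨u, h⟩ = 0 := by
  let G := T.graph.comap (WithLp.linearEquiv 2 𝕜 (E × F)).toLinearMap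
  have : CompleteSpace G :=
    (hclosed.preimage (WithLp.prod_continuous_ofLp 2 E F)).completeSpace_coe
  have hu0 : WithLp.toLp 2 (u, (0 : F)) ∈ G := by
    rw [← G.orthogonal_orthogonal, Submodule.mem_orthogonal]
    intro w hw
    obtain ⟨hw₂, hTw₂⟩ := exists_adjoint_apply_eq_neg_of_mem_orthogonal_graph hT hw
    have h : ⟪T† ⟨_, hw₂⟩, u⟫ = 0 := (Submodule.mem_orthogonal _ u).mp hu _ ⟨_, rfl⟩
    rw [hTw₂, inner_neg_left, neg_eq_zero] at h
    simpa only [WithLp.prod_inner_apply, inner_zero_right, add_zero] using h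
  exact ⟨mem_domain_of_mem_graph hu0, ((image_iff _).mpr hu0).symm⟩

end

/-- For a linear, closed, densely defined operator `F` between complex Hilbert spaces and a
fixed constant `C > 0`, the estimate `‖u‖ ≤ C‖Fu‖` on `Dom(F) ∩ closure(Range(F*))` holds
if and only if the estimate `‖v‖ ≤ C‖F*v‖` on `Dom(F*) ∩ closure(Range(F))` holds.
In particular the best constants in the two estimates agree. -/
theorem stmt1 {H₁ H₂ : Type*} [NormedAddCommGroup H₁] [InnerProductSpace ℂ H₁]
    [NormedAddCommGroup H₂] [InnerProductSpace ℂ H₂] [CompleteSpace H₁] [CompleteSpace H₂]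
    (F : H₁ →ₗ.[ℂ] H₂) (hdense : Dense (F.domain : Set H₁)) (hclosed : F.IsClosed)
    (C : ℝ) (hC : 0 < C) :
    (∀ u : F.domain,
        (u : H₁) ∈ closure (LinearMap.range F.adjoint.toFun : Set H₁) →
        ‖(u : H₁)‖ ≤ C * ‖F u‖) ↔
      (∀ v : F.adjoint.domain,
        (v : H₂) ∈ closure (LinearMap.range F.toFun : Set H₂) →
        ‖(v : H₂)‖ ≤ C * ‖F.adjoint v‖) := by
  constructor
  · exact (adjoint_isFormalAdjoint hdense).isBoundedBelowOn_closure_range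
      (fun _ hu => exists_apply_eq_zero_of_mem_orthogonal_range_adjoint hdense hclosed hu) hC.le
  · exact (adjoint_isFormalAdjoint hdense).symm.isBoundedBelowOn_closure_range
      (fun _ hy => exists_adjoint_apply_eq_zero_of_mem_orthogonal_range hdense hy) hC.le
end

section
/- Let C > 0 and 0 < t₀ ≤ 1 be real numbers, and let 0 < t < t₀. Then there exists a constant C_t > 0, depending only on C, t₀ and t, with the following property: for all real numbers x, g, m with g ≥ 0 and m ≥ 0, if x + (1 − t₀)g ≥ 0 and x + g ≥ C·m, then t(x + (1 − t)g) ≥ C_t(m + g). (One may take C_t = t·min(Cε, (1−ε)t₀ − t) for any ε ∈ (0,1) with (1−ε)t₀ > t.) -/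
/-! Write `x + (1 - t) g = ε (x + g) + (1 - ε) (x + (1 - t₀) g) + ((1 - ε) t₀ - t) g`. The first
term is at least `C ε m`, the second is nonnegative, and the third is a positive multiple of `g`
as soon as `(1 - ε) t₀ > t`; `ε = (t₀ - t) / (2 t₀)` works. -/

theorem min_mul_add_le_of_convex_comb {C t₀ t ε x g m : ℝ} (hε₀ : 0 ≤ ε) (hε₁ : ε ≤ 1)
    (hg : 0 ≤ g) (hm : 0 ≤ m) (h₁ : 0 ≤ x + (1 - t₀) * g) (h₂ : C * m ≤ x + g) :
    min (C * ε) ((1 - ε) * t₀ - t) * (m + g) ≤ x + (1 - t) * g := by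
  have hm' : min (C * ε) ((1 - ε) * t₀ - t) * m ≤ ε * (x + g) := by
    calc min (C * ε) ((1 - ε) * t₀ - t) * m ≤ C * ε * m :=
          mul_le_mul_of_nonneg_right (min_le_left _ _) hm
      _ = ε * (C * m) := by ring
      _ ≤ ε * (x + g) := mul_le_mul_of_nonneg_left h₂ hε₀
  have hg' : min (C * ε) ((1 - ε) * t₀ - t) * g ≤ ((1 - ε) * t₀ - t) * g :=
    mul_le_mul_of_nonneg_right (min_le_right _ _) hg
  have hx : 0 ≤ (1 - ε) * (x + (1 - t₀) * g) := mul_nonneg (by linarith) h₁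
  linarith

theorem stmt7_general (C t₀ t : ℝ) (hC : 0 < C)
    (ht : 0 < t) (htt₀ : t < t₀) :
    ∃ C_t > (0 : ℝ), ∀ x g m : ℝ, 0 ≤ g → 0 ≤ m →
      0 ≤ x + (1 - t₀) * g → C * m ≤ x + g →
      C_t * (m + g) ≤ t * (x + (1 - t) * g) := by
  have ht₀ : 0 < t₀ := ht.trans htt₀
  set ε := (t₀ - t) / (2 * t₀)
  have hε₀ : 0 < ε := div_pos (by linarith) (by linarith)
  have hε₁ : ε ≤ 1 := (div_le_one (by linarith)).2 (by linarith)
  have hgap : (1 - ε) * t₀ - t = (t₀ - t) / 2 := by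
    simp only [ε]
    field_simp
    ring
  refine ⟨t * min (C * ε) ((1 - ε) * t₀ - t), mul_pos ht (lt_min (by positivity) ?_), ?_⟩
  · rw [hgap]
    linarith
  · intro x g m hg hm h₁ h₂
    rw [mul_assoc]
    exact mul_le_mul_of_nonneg_left (min_mul_add_le_of_convex_comb hε₀.le hε₁ hg hm h₁ h₂) ht.le

/-- The scalar inequality underlying Lemma 2.2: given `C > 0`, `0 < t₀ ≤ 1` and `0 < t < t₀`,
there is `C_t > 0` such that for all reals `x, g, m` with `g, m ≥ 0`, if
`x + (1 − t₀)g ≥ 0` and `x + g ≥ C·m`, then `t(x + (1 − t)g) ≥ C_t(m + g)`. -/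
theorem stmt7 (C t₀ t : ℝ) (hC : 0 < C) (ht₀ : 0 < t₀) (ht₀' : t₀ ≤ 1)
    (ht : 0 < t) (htt₀ : t < t₀) :
    ∃ C_t > (0 : ℝ), ∀ x g m : ℝ, 0 ≤ g → 0 ≤ m →
      0 ≤ x + (1 - t₀) * g → C * m ≤ x + g →
      C_t * (m + g) ≤ t * (x + (1 - t) * g) :=
  stmt7_general C t₀ t hC ht htt₀
end
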